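/- arXiv:1212.1090 — 3 statements merged into one kernel-verified Lean document; each statement's English description precedes it below -/
import Mathlib

section
/- If (p,j,h) are contraction data for a cochain complex (K,δ) over (K',δ'), and t := δ₀ - δ is a perturbation such that th₀ is locally nilpotent, then with X := Σ_{i≥0} t(h₀t)^i, the perturbed data p_t := p₀(id + X h₀), j_t := (id + h₀ X) j₀, h_t := h₀ + h₀ X h₀, and δ'_t := δ' - p₀ X j₀ satisfy: p_t and j_t are cochain maps, p_t j_t = id, [h_t, δ] = id - j_t p_t, and the side conditions h_t² = 0, h_t j_t = 0, p_t h_t = 0 (Perturbation Lemma). -/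
/-!
STATEMENT 9 (Perturbation Lemma): Given contraction data (p₀,j₀,h₀) for (K,δ₀) over
(K',δ'), a perturbation t := δ₀ - δ with t∘h₀ locally nilpotent, and
X := Σ_{i≥0} t(h₀t)^i (characterized by X = t + t h₀ X), the perturbed data
p_t := p₀(id + X h₀), j_t := (id + h₀ X) j₀, h_t := h₀ + h₀ X h₀ and
δ'_t := δ' - p₀ X j₀ form contraction data for (K,δ) over (K',δ'_t).
-/

variable {K : Type*} [Field K] [CharZero K]
variable {V V' : Type*} [AddCommGroup V] [Module K V] [AddCommGroup V'] [Module K V']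

theorem perturbation_lemma
    (δ₀ δ : V →ₗ[K] V) (δ' : V' →ₗ[K] V')
    (p₀ : V →ₗ[K] V') (j₀ : V' →ₗ[K] V) (h₀ : V →ₗ[K] V)
    -- (K,δ₀), (K,δ) and (K',δ') are complexes (h₀ of degree -1, whence graded
    -- commutators [h₀,δ₀] are anticommutators)
    (hδ₀ : δ₀ ∘ₗ δ₀ = 0) (hδ : δ ∘ₗ δ = 0) (hδ' : δ' ∘ₗ δ' = 0)
    -- p₀, j₀ are cochain maps and (p₀,j₀,h₀) are contraction data:
    (hp₀ : δ' ∘ₗ p₀ = p₀ ∘ₗ δ₀) (hj₀ : δ₀ ∘ₗ j₀ = j₀ ∘ₗ δ')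
    (hpj : p₀ ∘ₗ j₀ = LinearMap.id)
    (hh : h₀ ∘ₗ δ₀ + δ₀ ∘ₗ h₀ = LinearMap.id - j₀ ∘ₗ p₀)
    (hside1 : h₀ ∘ₗ h₀ = 0) (hside2 : h₀ ∘ₗ j₀ = 0) (hside3 : p₀ ∘ₗ h₀ = 0)
    -- the perturbation t = δ₀ - δ, with t h₀ locally nilpotent:
    (t : V →ₗ[K] V) (ht : t = δ₀ - δ)
    (hnil : ∀ x : V, ∃ n : ℕ, ((t ∘ₗ h₀) ^ n) x = 0)
    -- X = Σ_{i≥0} t (h₀ t)^i, characterized by its fixed-point equation: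
    (X : V →ₗ[K] V) (hX : X = t + t ∘ₗ h₀ ∘ₗ X) :
    -- the perturbed data:
    ∀ (δt' : V' →ₗ[K] V') (pt : V →ₗ[K] V') (jt : V' →ₗ[K] V) (ht' : V →ₗ[K] V),
      δt' = δ' - p₀ ∘ₗ X ∘ₗ j₀ →
      pt = p₀ ∘ₗ (LinearMap.id + X ∘ₗ h₀) →
      jt = (LinearMap.id + h₀ ∘ₗ X) ∘ₗ j₀ →
      ht' = h₀ + h₀ ∘ₗ X ∘ₗ h₀ →
      -- (K',δ'_t) is a complex, p_t and j_t are cochain maps,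
      δt' ∘ₗ δt' = 0 ∧
      δt' ∘ₗ pt = pt ∘ₗ δ ∧
      δ ∘ₗ jt = jt ∘ₗ δt' ∧
      -- and (p_t, j_t, h_t) are contraction data for (K,δ) over (K',δ'_t):
      pt ∘ₗ jt = LinearMap.id ∧
      ht' ∘ₗ δ + δ ∘ₗ ht' = LinearMap.id - jt ∘ₗ pt ∧
      ht' ∘ₗ ht' = 0 ∧ ht' ∘ₗ jt = 0 ∧ pt ∘ₗ ht' = 0 := by
  intro δt' pt jt hT hδt'def hptdef hjtdef hhtdef
  subst hδt'def; subst hptdef; subst hjtdef; subst hhtdef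
  -- multiplicative forms of the hypotheses
  have hδ₀m : δ₀ * δ₀ = 0 := hδ₀
  have hδm : δ * δ = 0 := hδ
  have hside1m : h₀ * h₀ = 0 := hside1
  -- basic zero relations
  have hz1 : X - (t + t * (h₀ * X)) = 0 := sub_eq_zero_of_eq hX
  have hzδ : δ - (δ₀ - t) = 0 := by rw [ht]; abel
  have hz3 : δ₀ * t + t * δ₀ - t * t = 0 := by
    rw [ht]
    have c : δ₀ * (δ₀ - δ) + (δ₀ - δ) * δ₀ - (δ₀ - δ) * (δ₀ - δ) = δ₀ * δ₀ - δ * δ := by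
      noncomm_ring
    rw [c, hδ₀m, hδm, sub_zero]
  -- the second fixed point equation, via local nilpotency
  have hfix : X - (t + X * (h₀ * t)) = t * h₀ * (X - (t + X * (h₀ * t))) := by
    have c : (X - (t + X * (h₀ * t))) - t * h₀ * (X - (t + X * (h₀ * t)))
        = (X - (t + t * (h₀ * X))) - (X - (t + t * (h₀ * X))) * (h₀ * t) := by
      noncomm_ring
    rw [hz1] at c
    simp only [zero_mul, sub_zero] at c
    exact sub_eq_zero.mp c
  have hiter : ∀ n : ℕ, ((t * h₀) ^ n) * (X - (t + X * (h₀ * t))) = X - (t + X * (h₀ * t)) := by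
    intro n
    induction n with
    | zero => simp
    | succ n ih => rw [pow_succ, mul_assoc, ← hfix, ih]
  have hz2 : X - (t + X * (h₀ * t)) = 0 := by
    ext x
    obtain ⟨n, hn⟩ := hnil ((X - (t + X * (h₀ * t))) x)
    have h2 := congrArg (fun g : V →ₗ[K] V => g x) (hiter n)
    simp only [Module.End.mul_apply] at h2
    simp only [LinearMap.zero_apply]
    rw [← h2]
    exact hn
  -- the key identity
  have hC : (1 + X * h₀) * (δ₀ * X) + X * (δ₀ * (1 + h₀ * X)) - X * X = 0 := by
    have c : (1 + X * h₀) * (δ₀ * X) + X * (δ₀ * (1 + h₀ * X)) - X * X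
        = (1 + X * h₀) * ((δ₀ * t + t * δ₀ - t * t) * (1 + h₀ * X))
          + ((1 + X * h₀) * (δ₀ - t)) * (X - (t + t * (h₀ * X)))
          + (X - (t + X * (h₀ * t))) * (δ₀ * (1 + h₀ * X) - X) := by
      noncomm_ring
    rw [hz1, hz2, hz3] at c
    simpa using c
  -- j₀ ∘ p₀ in terms of the homotopy
  have hjpm : j₀ ∘ₗ p₀ = 1 - (h₀ * δ₀ + δ₀ * h₀) := by
    have c : j₀ ∘ₗ p₀ = LinearMap.id - (h₀ ∘ₗ δ₀ + δ₀ ∘ₗ h₀) := by rw [hh]; abel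
    exact c
  -- push-through and killing lemmas
  have P1a : ∀ (M : V →ₗ[K] V), δ' ∘ₗ (p₀ ∘ₗ M) = p₀ ∘ₗ (δ₀ ∘ₗ M) := fun M => by
    rw [← LinearMap.comp_assoc, hp₀, LinearMap.comp_assoc]
  have P1b : ∀ (M : V' →ₗ[K] V), δ' ∘ₗ (p₀ ∘ₗ M) = p₀ ∘ₗ (δ₀ ∘ₗ M) := fun M => by
    rw [← LinearMap.comp_assoc, hp₀, LinearMap.comp_assoc]
  have K3a : ∀ (M : V →ₗ[K] V), p₀ ∘ₗ (h₀ ∘ₗ M) = 0 := fun M => by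
    rw [← LinearMap.comp_assoc, hside3, LinearMap.zero_comp]
  have K3b : ∀ (M : V' →ₗ[K] V), p₀ ∘ₗ (h₀ ∘ₗ M) = 0 := fun M => by
    rw [← LinearMap.comp_assoc, hside3, LinearMap.zero_comp]
  have K4a : ∀ (M : V →ₗ[K] V), h₀ ∘ₗ (h₀ ∘ₗ M) = 0 := fun M => by
    rw [← LinearMap.comp_assoc, hside1, LinearMap.zero_comp]
  have K4b : ∀ (M : V' →ₗ[K] V), h₀ ∘ₗ (h₀ ∘ₗ M) = 0 := fun M => by
    rw [← LinearMap.comp_assoc, hside1, LinearMap.zero_comp]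
  refine ⟨?_, ?_, ?_, ?_, ?_, ?_, ?_, ?_⟩
  · -- δt' ∘ δt' = 0
    have g1 : (δ' - p₀ ∘ₗ X ∘ₗ j₀) ∘ₗ (δ' - p₀ ∘ₗ X ∘ₗ j₀)
        = p₀ ∘ₗ ((X * ((j₀ ∘ₗ p₀) * X) - (δ₀ * X + X * δ₀)) ∘ₗ j₀) := by
      simp only [Module.End.mul_eq_comp, Module.End.one_eq_id, LinearMap.comp_sub,
        LinearMap.sub_comp, LinearMap.comp_add, LinearMap.add_comp, LinearMap.comp_assoc,
        LinearMap.id_comp, LinearMap.comp_id, LinearMap.comp_zero, LinearMap.zero_comp,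
        hp₀, P1a, P1b, hδ', ← hj₀]
      try abel
    rw [g1, hjpm]
    have L1 : X * ((1 - (h₀ * δ₀ + δ₀ * h₀)) * X) - (δ₀ * X + X * δ₀) = 0 := by
      have c : X * ((1 - (h₀ * δ₀ + δ₀ * h₀)) * X) - (δ₀ * X + X * δ₀)
          = -((1 + X * h₀) * (δ₀ * X) + X * (δ₀ * (1 + h₀ * X)) - X * X) := by
        noncomm_ring
      rw [c, hC, neg_zero]
    rw [L1, LinearMap.zero_comp, LinearMap.comp_zero]
  · -- δt' ∘ pt = pt ∘ δ
    have g2L : (δ' - p₀ ∘ₗ X ∘ₗ j₀) ∘ₗ (p₀ ∘ₗ (LinearMap.id + X ∘ₗ h₀))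
        = p₀ ∘ₗ (δ₀ * (1 + X * h₀) - X * ((j₀ ∘ₗ p₀) * (1 + X * h₀))) := by
      simp only [Module.End.mul_eq_comp, Module.End.one_eq_id, LinearMap.comp_sub,
        LinearMap.sub_comp, LinearMap.comp_add, LinearMap.add_comp, LinearMap.comp_assoc,
        LinearMap.id_comp, LinearMap.comp_id, LinearMap.comp_zero, LinearMap.zero_comp,
        hp₀, P1a, P1b, hδ', ← hj₀]
      try abel
    have g2R : (p₀ ∘ₗ (LinearMap.id + X ∘ₗ h₀)) ∘ₗ δ = p₀ ∘ₗ ((1 + X * h₀) * δ) := by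
      simp only [Module.End.mul_eq_comp, Module.End.one_eq_id, LinearMap.comp_sub,
        LinearMap.sub_comp, LinearMap.comp_add, LinearMap.add_comp, LinearMap.comp_assoc,
        LinearMap.id_comp, LinearMap.comp_id]
    rw [g2L, g2R, hjpm]
    have L2 : δ₀ * (1 + X * h₀) - X * ((1 - (h₀ * δ₀ + δ₀ * h₀)) * (1 + X * h₀))
        = (1 + X * h₀) * δ := by
      rw [← sub_eq_zero]
      have c : δ₀ * (1 + X * h₀) - X * ((1 - (h₀ * δ₀ + δ₀ * h₀)) * (1 + X * h₀))
            - (1 + X * h₀) * δ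
          = -(X - (t + X * (h₀ * t)))
            + ((1 + X * h₀) * (δ₀ * X) + X * (δ₀ * (1 + h₀ * X)) - X * X) * h₀
            - (1 + X * h₀) * (δ - (δ₀ - t)) := by
        noncomm_ring
      rw [c, hz2, hC, hzδ]
      simp
    rw [L2]
  · -- δ ∘ jt = jt ∘ δt'
    have g3L : δ ∘ₗ ((LinearMap.id + h₀ ∘ₗ X) ∘ₗ j₀) = (δ * (1 + h₀ * X)) ∘ₗ j₀ := by
      simp only [Module.End.mul_eq_comp, Module.End.one_eq_id, LinearMap.comp_sub,
        LinearMap.sub_comp, LinearMap.comp_add, LinearMap.add_comp, LinearMap.comp_assoc,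
        LinearMap.id_comp, LinearMap.comp_id]
    have g3R : ((LinearMap.id + h₀ ∘ₗ X) ∘ₗ j₀) ∘ₗ (δ' - p₀ ∘ₗ X ∘ₗ j₀)
        = ((1 + h₀ * X) * δ₀ - (1 + h₀ * X) * ((j₀ ∘ₗ p₀) * X)) ∘ₗ j₀ := by
      simp only [Module.End.mul_eq_comp, Module.End.one_eq_id, LinearMap.comp_sub,
        LinearMap.sub_comp, LinearMap.comp_add, LinearMap.add_comp, LinearMap.comp_assoc,
        LinearMap.id_comp, LinearMap.comp_id, LinearMap.comp_zero, LinearMap.zero_comp,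
        hp₀, P1a, P1b, hδ', ← hj₀]
      try abel
    rw [g3L, g3R, hjpm]
    have L3 : δ * (1 + h₀ * X)
        = (1 + h₀ * X) * δ₀ - (1 + h₀ * X) * ((1 - (h₀ * δ₀ + δ₀ * h₀)) * X) := by
      rw [← sub_eq_zero]
      have c : δ * (1 + h₀ * X)
            - ((1 + h₀ * X) * δ₀ - (1 + h₀ * X) * ((1 - (h₀ * δ₀ + δ₀ * h₀)) * X))
          = (X - (t + t * (h₀ * X)))
            - h₀ * ((1 + X * h₀) * (δ₀ * X) + X * (δ₀ * (1 + h₀ * X)) - X * X)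
            + (δ - (δ₀ - t)) * (1 + h₀ * X) := by
        noncomm_ring
      rw [c, hz1, hC, hzδ]
      simp
    rw [L3]
  · -- pt ∘ jt = id
    simp only [LinearMap.comp_add, LinearMap.add_comp, LinearMap.comp_assoc,
      LinearMap.id_comp, LinearMap.comp_id, LinearMap.comp_zero, LinearMap.zero_comp,
      K3a, K3b, K4a, K4b, hside1, hside2, hside3, hpj, add_zero, zero_add]
  · -- homotopy relation
    have g5 : ((LinearMap.id + h₀ ∘ₗ X) ∘ₗ j₀) ∘ₗ (p₀ ∘ₗ (LinearMap.id + X ∘ₗ h₀))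
        = (1 + h₀ * X) * ((j₀ ∘ₗ p₀) * (1 + X * h₀)) := by
      simp only [Module.End.mul_eq_comp, Module.End.one_eq_id, LinearMap.comp_sub,
        LinearMap.sub_comp, LinearMap.comp_add, LinearMap.add_comp, LinearMap.comp_assoc,
        LinearMap.id_comp, LinearMap.comp_id]
      try abel
    rw [g5, hjpm]
    have L5 : (h₀ + h₀ * (X * h₀)) * δ + δ * (h₀ + h₀ * (X * h₀))
        = 1 - (1 + h₀ * X) * ((1 - (h₀ * δ₀ + δ₀ * h₀)) * (1 + X * h₀)) := by
      rw [← sub_eq_zero]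
      have c : (h₀ + h₀ * (X * h₀)) * δ + δ * (h₀ + h₀ * (X * h₀))
            - (1 - (1 + h₀ * X) * ((1 - (h₀ * δ₀ + δ₀ * h₀)) * (1 + X * h₀)))
          = h₀ * (X - (t + X * (h₀ * t))) + (X - (t + t * (h₀ * X))) * h₀
            - h₀ * ((1 + X * h₀) * (δ₀ * X) + X * (δ₀ * (1 + h₀ * X)) - X * X) * h₀
            + h₀ * ((1 + X * h₀) * (δ - (δ₀ - t)))
            + (δ - (δ₀ - t)) * ((1 + h₀ * X) * h₀) := by
        noncomm_ring
      rw [c, hz1, hz2, hC, hzδ]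
      simp
    exact L5
  · -- ht' ∘ ht' = 0
    have L6 : (h₀ + h₀ * (X * h₀)) * (h₀ + h₀ * (X * h₀)) = 0 := by
      have c : (h₀ + h₀ * (X * h₀)) * (h₀ + h₀ * (X * h₀))
          = (1 + h₀ * X) * ((h₀ * h₀) * (1 + X * h₀)) := by
        noncomm_ring
      rw [c, hside1m, zero_mul, mul_zero]
    exact L6
  · -- ht' ∘ jt = 0
    simp only [LinearMap.comp_add, LinearMap.add_comp, LinearMap.comp_assoc,
      LinearMap.id_comp, LinearMap.comp_id, LinearMap.comp_zero, LinearMap.zero_comp,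
      K3a, K3b, K4a, K4b, hside1, hside2, hside3, add_zero, zero_add]
  · -- pt ∘ ht' = 0
    simp only [LinearMap.comp_add, LinearMap.add_comp, LinearMap.comp_assoc,
      LinearMap.id_comp, LinearMap.comp_id, LinearMap.comp_zero, LinearMap.zero_comp,
      K3a, K3b, K4a, K4b, hside1, hside2, hside3, add_zero, zero_add]
end

section
/- Given complementary distributions C and V on a smooth manifold M and any auxiliary linear connection ∇̃, the formula ∇_X ω = ((∇̃_{X̄} + L_{CX})ω^C)^C + ((∇̃_{CX} + L_{X̄})ω̄)-bar defines a linear connection on Λ¹(M) that is adapted to (C,V): it preserves both C Λ¹ and Λ̄¹, and satisfies ∇_Y ω = (L_Y ω)-bar for Y ∈ X̄, ω ∈ Λ̄¹, and ∇_X ω = (L_X ω)^C for X ∈ CX, ω ∈ CΛ¹. -/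
/-!
STATEMENT 14: Given complementary distributions C and V on M and an auxiliary linear
connection ∇̃, the formula ∇_X ω = ((∇̃_{X̄} + L_{CX})ω^C)^C + ((∇̃_{CX} + L_{X̄})ω̄)-bar
defines a linear connection on Λ¹(M) adapted to (C,V): it preserves CΛ¹ and Λ̄¹, and
∇_Y ω = (L_Y ω)-bar for Y ∈ X̄, ω ∈ Λ̄¹, while ∇_X ω = (L_X ω)^C for X ∈ CX, ω ∈ CΛ¹.

Abstract model: A = C^∞(M), XM = vector fields, Ω = 1-forms, with the action of
vector fields on functions, the pairing ⟨·,·⟩, the differential d and the Lie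
derivative L, together with the complementary A-linear projections pC, pV on vector
fields and prC, prB on 1-forms determined by the pair (C,V).
-/

variable {K : Type*} [Field K] [CharZero K]
variable {A : Type*} [CommRing A] [Algebra K A]
variable {XM Ω : Type*} [AddCommGroup XM] [Module K XM] [Module A XM]
  [SMulCommClass K A XM] [AddCommGroup Ω] [Module K Ω] [Module A Ω] [SMulCommClass K A Ω]

theorem adapted_connection_exists
    (act : XM →ₗ[K] A →ₗ[K] A)        -- action of vector fields on functions
    (pairP : XM →ₗ[K] Ω →ₗ[K] A)      -- contraction ⟨X, ω⟩ = i_X ω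
    (d : A →ₗ[K] Ω)                   -- the de Rham differential on functions
    (L : XM →ₗ[K] Ω →ₗ[K] Ω)          -- the Lie derivative on 1-forms
    -- derivation property and A-linearity of the action:
    (hact1 : ∀ (X : XM) (f g : A), act X (f * g) = act X f * g + f * act X g)
    (hact2 : ∀ (f : A) (X : XM) (g : A), act (f • X) g = f * act X g)
    -- A-bilinearity of the pairing:
    (hpair1 : ∀ (f : A) (X : XM) (ω : Ω), pairP (f • X) ω = f * pairP X ω)
    (hpair2 : ∀ (X : XM) (f : A) (ω : Ω), pairP X (f • ω) = f * pairP X ω)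
    (hpaird : ∀ (X : XM) (f : A), pairP X (d f) = act X f)
    -- properties of the Lie derivative:
    (hL1 : ∀ (X : XM) (f : A) (ω : Ω), L X (f • ω) = act X f • ω + f • L X ω)
    (hL2 : ∀ (f : A) (X : XM) (ω : Ω), L (f • X) ω = f • L X ω + pairP X ω • d f)
    -- the auxiliary connection ∇̃:
    (conn : XM →ₗ[K] Ω →ₗ[K] Ω)
    (hconn1 : ∀ (f : A) (X : XM) (ω : Ω), conn (f • X) ω = f • conn X ω)
    (hconn2 : ∀ (X : XM) (f : A) (ω : Ω), conn X (f • ω) = act X f • ω + f • conn X ω)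
    -- the complementary projections determined by (C,V):
    (pC pV : XM →ₗ[K] XM) (prC prB : Ω →ₗ[K] Ω)
    (hpCA : ∀ (f : A) (X : XM), pC (f • X) = f • pC X)
    (hpVA : ∀ (f : A) (X : XM), pV (f • X) = f • pV X)
    (hprCA : ∀ (f : A) (ω : Ω), prC (f • ω) = f • prC ω)
    (hprBA : ∀ (f : A) (ω : Ω), prB (f • ω) = f • prB ω)
    (hpsum : pC + pV = LinearMap.id) (hprsum : prC + prB = LinearMap.id)
    (hpCidem : pC ∘ₗ pC = pC) (hprCidem : prC ∘ₗ prC = prC)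
    -- CΛ¹ = (CX)°, and Λ̄¹ kills V:
    (hann1 : ∀ (X : XM) (ω : Ω), pairP (pC X) (prC ω) = 0)
    (hann2 : ∀ (X : XM) (ω : Ω), pairP (pV X) (prB ω) = 0)
    -- the connection defined by the formula of the statement:
    (nabla : XM → Ω → Ω)
    (hnabla : ∀ (X : XM) (ω : Ω),
      nabla X ω = prC (conn (pV X) (prC ω) + L (pC X) (prC ω)) +
        prB (conn (pC X) (prB ω) + L (pV X) (prB ω))) :
    -- ∇ is a linear connection:
    (∀ (f : A) (X : XM) (ω : Ω), nabla (f • X) ω = f • nabla X ω) ∧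
    (∀ (X : XM) (f : A) (ω : Ω), nabla X (f • ω) = act X f • ω + f • nabla X ω) ∧
    -- ∇ is adapted to (C,V):
    -- (1) it restricts to Λ̄¹ (= ker prC),
    (∀ (X : XM) (ω : Ω), prC ω = 0 → prC (nabla X ω) = 0) ∧
    -- (2) it restricts to CΛ¹ (= ker prB),
    (∀ (X : XM) (ω : Ω), prB ω = 0 → prB (nabla X ω) = 0) ∧
    -- (3) ∇_Y ω = (L_Y ω)-bar for Y ∈ X̄ and ω ∈ Λ̄¹,
    (∀ (Y : XM) (ω : Ω), pC Y = 0 → prC ω = 0 → nabla Y ω = prB (L Y ω)) ∧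
    -- (4) ∇_X ω = (L_X ω)^C for X ∈ CX and ω ∈ CΛ¹.
    (∀ (X : XM) (ω : Ω), pV X = 0 → prB ω = 0 → nabla X ω = prC (L X ω)) := by
  have hsum : ∀ X : XM, pC X + pV X = X := fun X => congrFun (congrArg DFunLike.coe hpsum) X
  have hrsum : ∀ ω : Ω, prC ω + prB ω = ω := fun ω => congrFun (congrArg DFunLike.coe hprsum) ω
  have hCidem : ∀ ω : Ω, prC (prC ω) = prC ω := fun ω => congrFun (congrArg DFunLike.coe hprCidem) ω
  have hCB : ∀ ω : Ω, prC (prB ω) = 0 := by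
    intro ω
    have h2 : prC (prC ω) + prC (prB ω) = prC ω := by rw [← map_add, hrsum]
    rw [hCidem] at h2
    exact add_eq_left.mp h2
  have hBC : ∀ ω : Ω, prB (prC ω) = 0 := by
    intro ω
    have h2 : prC (prC ω) + prB (prC ω) = prC ω := hrsum (prC ω)
    rw [hCidem] at h2
    exact add_eq_left.mp h2
  have hBB : ∀ ω : Ω, prB (prB ω) = prB ω := by
    intro ω
    have h2 : prC (prB ω) + prB (prB ω) = prB ω := hrsum (prB ω)
    rw [hCB] at h2
    simpa using h2
  refine ⟨?_, ?_, ?_, ?_, ?_, ?_⟩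
  · intro f X ω
    rw [hnabla, hnabla]
    rw [hpVA, hpCA, hconn1, hconn1, hL2, hL2, hann1, hann2]
    simp only [zero_smul, add_zero, ← smul_add, hprCA, hprBA]
  · intro X f ω
    rw [hnabla, hnabla]
    rw [hprCA, hprBA, hconn2, hconn2, hL1, hL1]
    have hactX : act (pV X) f + act (pC X) f = act X f := by
      rw [add_comm, ← LinearMap.add_apply, ← map_add, hsum]
    have e1 : act (pV X) f • prC ω + f • conn (pV X) (prC ω) +
        (act (pC X) f • prC ω + f • L (pC X) (prC ω)) =
        act X f • prC ω + f • (conn (pV X) (prC ω) + L (pC X) (prC ω)) := by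
      rw [← hactX]; module
    have e2 : act (pC X) f • prB ω + f • conn (pC X) (prB ω) +
        (act (pV X) f • prB ω + f • L (pV X) (prB ω)) =
        act X f • prB ω + f • (conn (pC X) (prB ω) + L (pV X) (prB ω)) := by
      rw [← hactX]; module
    rw [e1, e2]
    simp only [map_add, hprCA, hprBA, hCidem, hBB]
    have hx : act X f • ω = act X f • prC ω + act X f • prB ω := by
      rw [← smul_add, hrsum]
    rw [hx, smul_add]
    simp only [smul_add]
    abel
  · intro X ω h
    rw [hnabla, h]
    simp [hCB]
  · intro X ω h
    rw [hnabla, h]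
    simp [hBC]
  · intro Y ω h1 h2
    have hY : pV Y = Y := by have := hsum Y; rw [h1, zero_add] at this; exact this
    have hω : prB ω = ω := by have := hrsum ω; rw [h2, zero_add] at this; exact this
    rw [hnabla, h1, h2, hY, hω]
    simp
  · intro X ω h1 h2
    have hX : pC X = X := by have := hsum X; rw [h1, add_zero] at this; exact this
    have hω : prC ω = ω := by have := hrsum ω; rw [h2, add_zero] at this; exact this
    rw [hnabla, h1, h2, hX, hω]
    simp
end

section
/- The torsion T of the adapted connection ∇ induced by ∇̃ with torsion T̃ is given by T(X,Y) = (T̃(X̄,Ȳ))-bar + C(T̃(CX,CY)) - ([CX,CY])-bar - C[X̄,Ȳ]. Consequently, a torsion-free adapted connection for (C,V) exists if and only if both C and V are involutive, and the adapted connection induced by any torsion-free ∇̃ is torsion-quasi-free (T(X,Y) = -([CX,CY])-bar - C[X̄,Ȳ]). -/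
/-!
Expanding `[X,Y]` along `X = CX + X̄`, `Y = CY + Ȳ`, the mixed brackets `[CX,Ȳ]` and `[X̄,CY]`
cancel, by skew-symmetry, against the Lie-derivative terms of `∇`.
Projecting the resulting formula onto `V` shows that for `X, Y` in `C` the `V`-part of `T(X,Y)`
is `-([X,Y])-bar`, so a torsion-free adapted connection forces `C` (and symmetrically `V`) to be
involutive. Conversely, for a torsion-free `∇̃` and involutive `C`, `V` every term of the formula
vanishes.
-/

-- `act` is the action of vector fields on functions, `br` the Lie bracket, and `pC`, `pV` the
-- projections onto `C` and `V`, so that `X̄ = pV X`.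
variable {K : Type*} [Field K] [CharZero K]
variable {A : Type*} [CommRing A] [Algebra K A]
variable {XM : Type*} [AddCommGroup XM] [Module K XM] [Module A XM] [SMulCommClass K A XM]

/-- `D` is a linear connection on vector fields. -/
def IsConn (act : XM →ₗ[K] A →ₗ[K] A) (D : XM →ₗ[K] XM →ₗ[K] XM) : Prop :=
  (∀ (f : A) (X Y : XM), D (f • X) Y = f • D X Y) ∧
  (∀ (X : XM) (f : A) (Y : XM), D X (f • Y) = act X f • Y + f • D X Y)

/-- The adapted connection induced by an auxiliary connection `D`. -/
noncomputable def indConn (br : XM →ₗ[K] XM →ₗ[K] XM) (pC pV : XM →ₗ[K] XM)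
    (D : XM →ₗ[K] XM →ₗ[K] XM) (X Y : XM) : XM :=
  pV (D (pV X) (pV Y) + br (pC X) (pV Y)) + pC (D (pC X) (pC Y) + br (pV X) (pC Y))

/-- The torsion of a (bilinear) connection. -/
noncomputable def torsion (br : XM →ₗ[K] XM →ₗ[K] XM) (D : XM → XM → XM) (X Y : XM) : XM :=
  D X Y - D Y X - br X Y

namespace LinearMap

variable {R M : Type*} [Semiring R] [AddCommGroup M] [Module R M] {p q : M →ₗ[R] M}

theorem apply_add_apply_of_add_eq_id (h : p + q = id) (x : M) : p x + q x = x :=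
  LinearMap.congr_fun h x

theorem apply_apply_eq_zero_of_add_eq_id (h : p + q = id) (hp : p ∘ₗ p = p) (x : M) :
    q (p x) = 0 := by
  rw [eq_sub_of_add_eq' h]
  exact LinearMap.congr_fun (IsIdempotentElem.one_sub_mul_self hp) x

theorem comp_self_of_add_eq_id (h : p + q = id) (hp : p ∘ₗ p = p) : q ∘ₗ q = q := by
  rw [eq_sub_of_add_eq' h]
  exact IsIdempotentElem.one_sub hp

end LinearMap

open LinearMap

section AdaptedConnection

omit [CharZero K]

def IsInvolutiveKer (br : XM →ₗ[K] XM →ₗ[K] XM) (q : XM →ₗ[K] XM) : Prop :=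
  ∀ X Y : XM, q X = 0 → q Y = 0 → q (br X Y) = 0

variable {br : XM →ₗ[K] XM →ₗ[K] XM} {pC pV : XM →ₗ[K] XM} {D : XM →ₗ[K] XM →ₗ[K] XM}

theorem indConn_comm : indConn br pC pV D = indConn br pV pC D := by
  ext X Y
  exact add_comm _ _

theorem torsion_indConn (hbrskew : ∀ X Y : XM, br X Y = -br Y X)
    (hpsum : pC + pV = LinearMap.id) (X Y : XM) :
    torsion br (indConn br pC pV D) X Y =
      pV (torsion br (fun X' Y' => D X' Y') (pV X) (pV Y)) +
        pC (torsion br (fun X' Y' => D X' Y') (pC X) (pC Y)) -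
        pV (br (pC X) (pC Y)) - pC (br (pV X) (pV Y)) := by
  have hid := apply_add_apply_of_add_eq_id hpsum
  have hbr : br X Y =
      br (pC X) (pC Y) + br (pC X) (pV Y) + br (pV X) (pC Y) + br (pV X) (pV Y) := by
    conv_lhs => rw [← hid X, ← hid Y]
    simp only [map_add, LinearMap.add_apply]
    abel
  simp only [torsion, indConn, map_add, map_sub]
  rw [hbr, hbrskew (pC Y) (pV X), hbrskew (pV Y) (pC X), map_neg, map_neg]
  linear_combination (norm := abel) hid (br (pC X) (pC Y)) + hid (br (pC X) (pV Y)) +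
    hid (br (pV X) (pC Y)) + hid (br (pV X) (pV Y))

theorem torsion_indConn_of_torsion_eq_zero (hbrskew : ∀ X Y : XM, br X Y = -br Y X)
    (hpsum : pC + pV = LinearMap.id)
    (hD : ∀ X Y : XM, torsion br (fun X' Y' => D X' Y') X Y = 0) (X Y : XM) :
    torsion br (indConn br pC pV D) X Y = -pV (br (pC X) (pC Y)) - pC (br (pV X) (pV Y)) := by
  rw [torsion_indConn hbrskew hpsum, hD, hD, map_zero, map_zero, zero_add, zero_sub]

theorem pV_torsion_indConn (hbrskew : ∀ X Y : XM, br X Y = -br Y X)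
    (hpsum : pC + pV = LinearMap.id) (hpCidem : pC ∘ₗ pC = pC) (X Y : XM) :
    pV (torsion br (indConn br pC pV D) X Y) =
      pV (torsion br (fun X' Y' => D X' Y') (pV X) (pV Y)) - pV (br (pC X) (pC Y)) := by
  have hVV Z : pV (pV Z) = pV Z := LinearMap.congr_fun (comp_self_of_add_eq_id hpsum hpCidem) Z
  rw [torsion_indConn hbrskew hpsum]
  simp only [map_sub, map_add, hVV, apply_apply_eq_zero_of_add_eq_id hpsum hpCidem]
  abel

theorem isInvolutiveKer_of_torsion_indConn_eq_zero (hbrskew : ∀ X Y : XM, br X Y = -br Y X)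
    (hpsum : pC + pV = LinearMap.id) (hpCidem : pC ∘ₗ pC = pC)
    (hT : ∀ X Y : XM, torsion br (indConn br pC pV D) X Y = 0) : IsInvolutiveKer br pV := by
  intro X Y hX hY
  have hid := apply_add_apply_of_add_eq_id hpsum
  have hCX : pC X = X := by simpa [hX] using hid X
  have hCY : pC Y = Y := by simpa [hY] using hid Y
  have h := pV_torsion_indConn (D := D) hbrskew hpsum hpCidem X Y
  rw [hT, hX, hY, hCX, hCY] at h
  simpa [torsion] using h

theorem torsion_indConn_eq_zero_of_isInvolutiveKer (hbrskew : ∀ X Y : XM, br X Y = -br Y X)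
    (hpsum : pC + pV = LinearMap.id) (hpCidem : pC ∘ₗ pC = pC)
    (hD : ∀ X Y : XM, torsion br (fun X' Y' => D X' Y') X Y = 0)
    (hC : IsInvolutiveKer br pV) (hV : IsInvolutiveKer br pC) (X Y : XM) :
    torsion br (indConn br pC pV D) X Y = 0 := by
  have hVC := apply_apply_eq_zero_of_add_eq_id hpsum hpCidem
  have hCV := apply_apply_eq_zero_of_add_eq_id ((add_comm pV pC).trans hpsum)
    (comp_self_of_add_eq_id hpsum hpCidem)
  rw [torsion_indConn_of_torsion_eq_zero hbrskew hpsum hD, hC _ _ (hVC X) (hVC Y),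
    hV _ _ (hCV X) (hCV Y), neg_zero, sub_zero]

end AdaptedConnection

theorem adapted_connection_torsion_general
    (act : XM →ₗ[K] A →ₗ[K] A)
    (br : XM →ₗ[K] XM →ₗ[K] XM)
    (hbrskew : ∀ X Y : XM, br X Y = -br Y X)
    (pC pV : XM →ₗ[K] XM)
    (hpsum : pC + pV = LinearMap.id) (hpCidem : pC ∘ₗ pC = pC)
    -- the auxiliary connection ∇̃:
    (D : XM →ₗ[K] XM →ₗ[K] XM) :
    -- (a) the torsion formula T(X,Y) = (T̃(X̄,Ȳ))-bar + C(T̃(CX,CY))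
    --                                  - ([CX,CY])-bar - C[X̄,Ȳ]:
    (∀ X Y : XM, torsion br (indConn br pC pV D) X Y =
      pV (torsion br (fun X' Y' => D X' Y') (pV X) (pV Y)) +
        pC (torsion br (fun X' Y' => D X' Y') (pC X) (pC Y)) -
        pV (br (pC X) (pC Y)) - pC (br (pV X) (pV Y))) ∧
    -- (b) the adapted connection induced by a torsion-free ∇̃ is torsion-quasi-free:
    ((∀ X Y : XM, torsion br (fun X' Y' => D X' Y') X Y = 0) →
      ∀ X Y : XM, torsion br (indConn br pC pV D) X Y =
        -pV (br (pC X) (pC Y)) - pC (br (pV X) (pV Y))) ∧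
    -- (c) provided some torsion-free connection exists, a torsion-free adapted
    -- connection exists iff both C and V are involutive:
    ((∃ D₀ : XM →ₗ[K] XM →ₗ[K] XM, IsConn act D₀ ∧
        ∀ X Y : XM, torsion br (fun X' Y' => D₀ X' Y') X Y = 0) →
      ((∃ D₁ : XM →ₗ[K] XM →ₗ[K] XM, IsConn act D₁ ∧
          ∀ X Y : XM, torsion br (indConn br pC pV D₁) X Y = 0) ↔
        ((∀ X Y : XM, pV X = 0 → pV Y = 0 → pV (br X Y) = 0) ∧
          (∀ X Y : XM, pC X = 0 → pC Y = 0 → pC (br X Y) = 0)))) := by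
  have hpsum' : pV + pC = LinearMap.id := (add_comm pV pC).trans hpsum
  have hpVidem : pV ∘ₗ pV = pV := comp_self_of_add_eq_id hpsum hpCidem
  refine ⟨torsion_indConn hbrskew hpsum,
    torsion_indConn_of_torsion_eq_zero hbrskew hpsum, ?_⟩
  rintro ⟨D₀, hD₀, hD₀free⟩
  constructor
  · rintro ⟨D₁, -, hD₁free⟩
    have hD₁free' : ∀ X Y, torsion br (indConn br pV pC D₁) X Y = 0 := by
      rwa [← indConn_comm]
    exact ⟨isInvolutiveKer_of_torsion_indConn_eq_zero hbrskew hpsum hpCidem hD₁free,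
      isInvolutiveKer_of_torsion_indConn_eq_zero hbrskew hpsum' hpVidem hD₁free'⟩
  · rintro ⟨hC, hV⟩
    exact ⟨D₀, hD₀,
      torsion_indConn_eq_zero_of_isInvolutiveKer hbrskew hpsum hpCidem hD₀free hC hV⟩

theorem adapted_connection_torsion
    (act : XM →ₗ[K] A →ₗ[K] A)
    (br : XM →ₗ[K] XM →ₗ[K] XM)
    (hact1 : ∀ (X : XM) (f g : A), act X (f * g) = act X f * g + f * act X g)
    (hact2 : ∀ (f : A) (X : XM) (g : A), act (f • X) g = f * act X g)
    (hbrskew : ∀ X Y : XM, br X Y = -br Y X)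
    (hbrleib : ∀ (X : XM) (f : A) (Y : XM), br X (f • Y) = act X f • Y + f • br X Y)
    (hjac : ∀ X Y Z : XM, br X (br Y Z) = br (br X Y) Z + br Y (br X Z))
    (pC pV : XM →ₗ[K] XM)
    (hpCA : ∀ (f : A) (X : XM), pC (f • X) = f • pC X)
    (hpVA : ∀ (f : A) (X : XM), pV (f • X) = f • pV X)
    (hpsum : pC + pV = LinearMap.id) (hpCidem : pC ∘ₗ pC = pC)
    -- the auxiliary connection ∇̃:
    (D : XM →ₗ[K] XM →ₗ[K] XM) (hD : IsConn act D) :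
    -- (a) the torsion formula T(X,Y) = (T̃(X̄,Ȳ))-bar + C(T̃(CX,CY))
    --                                  - ([CX,CY])-bar - C[X̄,Ȳ]:
    (∀ X Y : XM, torsion br (indConn br pC pV D) X Y =
      pV (torsion br (fun X' Y' => D X' Y') (pV X) (pV Y)) +
        pC (torsion br (fun X' Y' => D X' Y') (pC X) (pC Y)) -
        pV (br (pC X) (pC Y)) - pC (br (pV X) (pV Y))) ∧
    -- (b) the adapted connection induced by a torsion-free ∇̃ is torsion-quasi-free:
    ((∀ X Y : XM, torsion br (fun X' Y' => D X' Y') X Y = 0) →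
      ∀ X Y : XM, torsion br (indConn br pC pV D) X Y =
        -pV (br (pC X) (pC Y)) - pC (br (pV X) (pV Y))) ∧
    -- (c) provided some torsion-free connection exists, a torsion-free adapted
    -- connection exists iff both C and V are involutive:
    ((∃ D₀ : XM →ₗ[K] XM →ₗ[K] XM, IsConn act D₀ ∧
        ∀ X Y : XM, torsion br (fun X' Y' => D₀ X' Y') X Y = 0) →
      ((∃ D₁ : XM →ₗ[K] XM →ₗ[K] XM, IsConn act D₁ ∧
          ∀ X Y : XM, torsion br (indConn br pC pV D₁) X Y = 0) ↔
        ((∀ X Y : XM, pV X = 0 → pV Y = 0 → pV (br X Y) = 0) ∧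
          (∀ X Y : XM, pC X = 0 → pC Y = 0 → pC (br X Y) = 0)))) :=
  adapted_connection_torsion_general act br hbrskew pC pV hpsum hpCidem D
end
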